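/- arXiv:2110.06370 — 3 statements merged into one kernel-verified Lean document; each statement's English description precedes it below -/
import Mathlib

section
/- For n a positive integer, let m₀(k) := (2k+n)·(k+1)·(k+2)⋯(n+k-1)/n! denote the dimension of the space of spherical harmonics of degree k on the n-sphere. Then for every t > 0, the series (1/2)·∑_{k=0}^{∞} m₀(k)·e^{-(k + n/2)t} converges and equals cosh(t/2) / (2·sinh(t/2))^{n+1}. -/
/-!
Since `(2k+n)(k+1)⋯(k+n-1) = n! (C(k+n,n) + C(k+n-1,n))`, the series is `½ e^{-nt/2}` times the
sum of two negative-binomial series in `x = e^{-t}`, which add up to `(1+x)/(1-x)^{n+1}`.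
Writing `2 sinh(t/2) = e^{t/2}(1-x)` and `2 cosh(t/2) = e^{t/2}(1+x)` gives the closed form.
-/

open Real Finset

open Nat in
theorem two_mul_add_succ_mul_ascFactorial (k m : ℕ) :
    (2 * k + (m + 1)) * (k + 1).ascFactorial m =
      (m + 1)! * ((k + m + 1).choose (m + 1) + (k + m).choose (m + 1)) := by
  have upper :
      (m + 1)! * (k + m + 1).choose (m + 1) = (k + 1 + m) * (k + 1).ascFactorial m := by
    rw [add_assoc k m 1, ← Nat.ascFactorial_succ, Nat.ascFactorial_eq_factorial_mul_choose]
  have lower : (m + 1)! * (k + m).choose (m + 1) = k * (k + 1).ascFactorial m := by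
    rw [Nat.succ_ascFactorial, ← Nat.ascFactorial_succ, Nat.ascFactorial_eq_factorial_mul_choose',
      Nat.add_succ_sub_one]
  rw [Nat.mul_add, upper, lower]
  ring

theorem two_mul_add_mul_prod_div_factorial {K : Type*} [Field K] [CharZero K] {n : ℕ}
    (hn : 1 ≤ n) (k : ℕ) :
    (2 * (k : K) + n) * (∏ i ∈ range (n - 1), ((k : K) + 1 + i)) / n.factorial =
      (k + n).choose n + (k + n - 1).choose n := by
  obtain ⟨m, rfl⟩ := Nat.exists_eq_add_of_le' hn
  have h := congrArg (Nat.cast : ℕ → K) (two_mul_add_succ_mul_ascFactorial k m)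
  rw [Nat.ascFactorial_eq_prod_range] at h
  push_cast at h
  rw [Nat.add_sub_cancel, div_eq_iff (Nat.cast_ne_zero.mpr (Nat.factorial_ne_zero _)),
    ← add_assoc, Nat.add_sub_cancel]
  push_cast
  linear_combination h

theorem hasSum_choose_add_choose_mul_geometric {𝕜 : Type*} [NormedField 𝕜]
    [HasSummableGeomSeries 𝕜] {n : ℕ} (hn : 1 ≤ n) {x : 𝕜} (hx : ‖x‖ < 1) :
    HasSum (fun k : ℕ => (((k + n).choose n : 𝕜) + (k + n - 1).choose n) * x ^ k)
      ((1 + x) / (1 - x) ^ (n + 1)) := by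
  have upper := hasSum_choose_mul_geometric_of_norm_lt_one n hx
  have lower :
      HasSum (fun k : ℕ => ((k + n - 1).choose n : 𝕜) * x ^ k) (x / (1 - x) ^ (n + 1)) := by
    have shifted : HasSum (fun k : ℕ => ((k + 1 + n - 1).choose n : 𝕜) * x ^ (k + 1))
        (x / (1 - x) ^ (n + 1)) := by
      rw [div_eq_mul_one_div]
      refine (upper.mul_left x).congr_fun fun k => ?_
      rw [Nat.add_right_comm, Nat.add_sub_cancel, pow_succ]
      ring
    rw [← hasSum_nat_add_iff' 1]
    simpa [Nat.choose_eq_zero_of_lt (Nat.sub_one_lt_of_lt hn)] using shifted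
  convert upper.add lower using 1
  · ext k; ring
  · ring

theorem cosh_div_two_mul_sinh_pow {t : ℝ} (ht : t ≠ 0) (n : ℕ) :
    cosh (t / 2) / (2 * sinh (t / 2)) ^ (n + 1) =
      1 / 2 * exp (-(n / 2 * t)) * ((1 + exp (-t)) / (1 - exp (-t)) ^ (n + 1)) := by
  have half : exp (t / 2) * exp (-t) = exp (-(t / 2)) := by rw [← exp_add]; ring_nf
  have two_sinh : 2 * sinh (t / 2) = exp (t / 2) * (1 - exp (-t)) := by
    rw [sinh_eq, mul_sub, half]; ring
  have two_cosh : 2 * cosh (t / 2) = exp (t / 2) * (1 + exp (-t)) := by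
    rw [cosh_eq, mul_add, half]; ring
  have scale : exp (t / 2) ^ n * exp (-(t * n / 2)) = 1 := by
    rw [← exp_nat_mul, ← exp_add]; ring_nf; exact exp_zero
  have gap : 1 - exp (-t) ≠ 0 :=
    sub_ne_zero.mpr fun h => ht (by simpa using (exp_eq_one_iff _).mp h.symm)
  rw [two_sinh, mul_pow]
  field_simp
  linear_combination two_cosh - exp (t / 2) * (1 + exp (-t)) * scale

/-- The free wave trace on H^{n+1} in even dimensions: with
m₀(k) = (2k+n)(k+1)⋯(n+k-1)/n!, for all t > 0 we have
(1/2)∑ₖ m₀(k) e^{-(k+n/2)t} = cosh(t/2)/(2 sinh(t/2))^{n+1}. -/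
theorem free_wave_trace_sum (n : ℕ) (hn : 1 ≤ n) (t : ℝ) (ht : 0 < t) :
    HasSum
      (fun k : ℕ =>
        (1/2 : ℝ) *
          ((2 * (k : ℝ) + n) * (∏ i ∈ Finset.range (n-1), ((k : ℝ) + 1 + i)) / (Nat.factorial n : ℝ)) *
          Real.exp (-((k : ℝ) + n/2) * t))
      (Real.cosh (t/2) / (2 * Real.sinh (t/2))^(n+1)) := by
  have hx : ‖exp (-t)‖ < 1 := by
    rw [norm_of_nonneg (exp_pos _).le, exp_lt_one_iff]
    linarith
  rw [cosh_div_two_mul_sinh_pow ht.ne' n]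
  refine ((hasSum_choose_add_choose_mul_geometric hn hx).mul_left
    (1 / 2 * exp (-(n / 2 * t)))).congr_fun fun k => ?_
  have split : exp (-(k + n / 2) * t) = exp (-(n / 2 * t)) * exp (-t) ^ k := by
    rw [← exp_nat_mul, ← exp_add]; ring_nf
  rw [two_mul_add_mul_prod_div_factorial hn, split]
  ring
end

section
/- Fix k ≥ 1 and r > 0, and let g be a smooth function on (0,∞). The function u(r) := -(1/4)·φ(r)·∫₀¹ s^{k-1}·g(sr)/φ(sr) ds, with φ(r) = (sinh r/r)^{-n/2}, satisfies the transport equation [4r·(d/dr) + 2n·(r·coth r - 1) + 4k]·u(r) = -g(r). -/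
open Real MeasureTheory intervalIntegral

lemma sinh_le_mul_cosh (t : ℝ) (ht : 0 ≤ t) : Real.sinh t ≤ t * Real.cosh t := by
  have hd : ∀ x : ℝ, HasDerivAt (fun y : ℝ => y * Real.cosh y - Real.sinh y)
      (x * Real.sinh x) x := by
    intro x
    have h1 := ((hasDerivAt_id x).mul (Real.hasDerivAt_cosh x)).sub (Real.hasDerivAt_sinh x)
    exact h1.congr_deriv (by simp only [id_eq]; ring)
  have hmono : Monotone (fun y : ℝ => y * Real.cosh y - Real.sinh y) := by
    apply monotone_of_deriv_nonneg
    · exact fun x => (hd x).differentiableAt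
    · intro x
      rw [(hd x).deriv]
      rcases le_or_gt 0 x with hx | hx
      · exact mul_nonneg hx (Real.sinh_nonneg_iff.mpr hx)
      · exact mul_nonneg_iff.mpr (Or.inr ⟨hx.le, Real.sinh_nonpos_iff.mpr hx.le⟩)
  have := hmono ht
  simpa using this

/-- The recursive solution of the Hadamard transport equations: with
φ(r) = (sinh r/r)^{-n/2} and u(r) = -(1/4) φ(r) ∫₀¹ s^{k-1} g(sr)/φ(sr) ds,
one has [4r d/dr + 2n(r coth r - 1) + 4k] u = -g on (0,∞). -/
theorem transport_recursive (n k : ℕ) (hn : 1 ≤ n) (hk : 1 ≤ k)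
    (g : ℝ → ℝ) (hg : ContDiffOn ℝ (⊤ : ℕ∞) g (Set.Ioi 0))
    (hgc : ContinuousOn g (Set.Ici 0)) (r : ℝ) (hr : 0 < r) :
    let φ : ℝ → ℝ := fun x => (Real.sinh x / x) ^ (-(n : ℝ)/2)
    let u : ℝ → ℝ := fun x =>
      -(1/4) * φ x * ∫ s in (0:ℝ)..1, s^(k-1) * g (s * x) / φ (s * x)
    4 * r * deriv u r
      + 2 * (n : ℝ) * (r * (Real.cosh r / Real.sinh r) - 1) * u r
      + 4 * (k : ℝ) * u r = -g r := by
  intro φ u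
  have hφdef : φ = fun x => (Real.sinh x / x) ^ (-(n : ℝ)/2) := rfl
  have hsinh : 0 < Real.sinh r := Real.sinh_pos_iff.mpr hr
  have hb : ∀ x : ℝ, 0 < x → 0 < Real.sinh x / x :=
    fun x hx => div_pos (Real.sinh_pos_iff.mpr hx) hx
  have hφpos : ∀ x : ℝ, 0 < x → 0 < φ x :=
    fun x hx => Real.rpow_pos_of_pos (hb x hx) _
  set G : ℝ → ℝ := fun t => t ^ (k-1) * g t / φ t with hG
  set F : ℝ → ℝ := fun x => ∫ t in (0:ℝ)..x, G t with hF
  -- continuity of φ on Ioi 0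
  have hφcont : ContinuousOn φ (Set.Ioi 0) := by
    intro x hx
    apply ContinuousAt.continuousWithinAt
    rw [hφdef]
    exact (Real.continuous_sinh.continuousAt.div continuousAt_id
      (ne_of_gt hx)).rpow_const (Or.inl (ne_of_gt (hb x hx)))
  -- continuity of G on Ioi 0
  have hGcont : ContinuousOn G (Set.Ioi 0) := by
    rw [hG]
    exact (((continuous_pow (k-1)).continuousOn).mul hg.continuousOn).div
      hφcont (fun x hx => (hφpos x hx).ne')
  -- interval integrability of G on [0, r]
  have hGint : IntervalIntegrable G volume 0 r := by
    rw [intervalIntegrable_iff_integrableOn_Ioc_of_le hr.le]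
    obtain ⟨M, hM⟩ :=
      (isCompact_Icc (a := (0:ℝ)) (b := r)).exists_bound_of_continuousOn
        (hgc.mono (Set.Icc_subset_Ici_self))
    refine ⟨(hGcont.mono (fun t ht => ht.1)).aestronglyMeasurable measurableSet_Ioc, ?_⟩
    apply HasFiniteIntegral.restrict_of_bounded
      (C := r ^ (k-1) * M * Real.cosh r ^ ((n:ℝ)/2)) measure_Ioc_lt_top
    rw [ae_restrict_iff' measurableSet_Ioc]
    filter_upwards with t ht
    have ht0 : 0 < t := ht.1
    have hbt : 0 < Real.sinh t / t := hb t ht0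
    have hφt : 0 < φ t := hφpos t ht0
    have hinv : (φ t)⁻¹ = (Real.sinh t / t) ^ ((n:ℝ)/2) := by
      have hts : φ t = (Real.sinh t / t) ^ (-(n:ℝ)/2) := rfl
      rw [hts, neg_div, Real.rpow_neg hbt.le, inv_inv]
    have h1 : ‖G t‖ = t ^ (k-1) * ‖g t‖ * (φ t)⁻¹ := by
      rw [hG]
      simp only [Real.norm_eq_abs]
      rw [abs_div, abs_mul, abs_pow, abs_of_pos ht0, abs_of_pos hφt, div_eq_mul_inv]
    rw [h1, hinv]
    have hgt : ‖g t‖ ≤ M := hM t ⟨ht0.le, ht.2⟩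
    have hMnn : (0:ℝ) ≤ M := le_trans (norm_nonneg _) (hM 0 ⟨le_rfl, hr.le⟩)
    have hbound : (Real.sinh t / t) ^ ((n:ℝ)/2) ≤ Real.cosh t ^ ((n:ℝ)/2) := by
      apply Real.rpow_le_rpow hbt.le _ (by positivity)
      rw [div_le_iff₀ ht0]
      calc Real.sinh t ≤ t * Real.cosh t := sinh_le_mul_cosh t ht0.le
        _ = Real.cosh t * t := mul_comm _ _
    have hcosh : Real.cosh t ^ ((n:ℝ)/2) ≤ Real.cosh r ^ ((n:ℝ)/2) := by
      apply Real.rpow_le_rpow (Real.cosh_pos t).le _ (by positivity)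
      exact Real.cosh_le_cosh.mpr (by rw [abs_of_pos ht0, abs_of_pos hr]; exact ht.2)
    have htk : t ^ (k-1) ≤ r ^ (k-1) := pow_le_pow_left₀ ht0.le ht.2 _
    exact mul_le_mul (mul_le_mul htk hgt (norm_nonneg _) (by positivity))
      (le_trans hbound hcosh) (by positivity) (by positivity)
  -- FTC: derivative of F at r
  have hFderiv : HasDerivAt F (G r) r := by
    rw [hF]
    exact integral_hasDerivAt_right hGint
      (hGcont.stronglyMeasurableAtFilter isOpen_Ioi r hr)
      (hGcont.continuousAt (isOpen_Ioi.mem_nhds hr))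
  -- derivative of φ at r
  have hbr : HasDerivAt (fun x => Real.sinh x / x)
      ((Real.cosh r * r - Real.sinh r * 1) / r ^ 2) r :=
    (Real.hasDerivAt_sinh r).div (hasDerivAt_id r) (ne_of_gt hr)
  have hφderiv : HasDerivAt φ
      ((Real.cosh r * r - Real.sinh r * 1) / r ^ 2 * (-(n : ℝ)/2)
        * (Real.sinh r / r) ^ (-(n : ℝ)/2 - 1)) r := by
    rw [hφdef]
    exact hbr.rpow_const (Or.inl (ne_of_gt (hb r hr)))
  -- derivative of x ↦ (x^k)⁻¹ at r
  have hpow : HasDerivAt (fun x : ℝ => (x ^ k)⁻¹)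
      (-(↑k * r ^ (k-1)) / (r ^ k) ^ 2) r :=
    (hasDerivAt_pow k r).inv (pow_ne_zero k (ne_of_gt hr))
  -- u agrees with v near r
  have hkey : ∀ x : ℝ, 0 < x →
      (∫ s in (0:ℝ)..1, s ^ (k-1) * g (s * x) / φ (s * x)) = (x ^ k)⁻¹ * F x := by
    intro x hx
    have h1 : ∀ s : ℝ, s ^ (k-1) * g (s * x) / φ (s * x) = (x ^ (k-1))⁻¹ * G (s * x) := by
      intro s
      have hGsx : G (s * x) = (s * x) ^ (k-1) * g (s * x) / φ (s * x) := rfl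
      rw [hGsx, mul_pow]
      generalize φ (s * x) = w
      generalize g (s * x) = y
      have hxk : (x:ℝ) ^ (k-1) ≠ 0 := pow_ne_zero _ (ne_of_gt hx)
      rw [div_eq_mul_inv, div_eq_mul_inv,
        show (x ^ (k-1))⁻¹ * (s ^ (k-1) * x ^ (k-1) * y * w⁻¹)
          = ((x ^ (k-1))⁻¹ * x ^ (k-1)) * (s ^ (k-1) * y * w⁻¹) by ring,
        inv_mul_cancel₀ hxk, one_mul]
    simp only [h1]
    rw [intervalIntegral.integral_const_mul,
      intervalIntegral.integral_comp_mul_right G (ne_of_gt hx)]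
    simp only [zero_mul, one_mul, smul_eq_mul]
    have hxk : (x:ℝ) ^ k = x ^ (k-1) * x := by
      conv_lhs => rw [← Nat.sub_add_cancel hk]
      rw [pow_succ]
    rw [hF, hxk, mul_inv, mul_assoc]
  have huv : u =ᶠ[nhds r] fun x => -(1/4) * φ x * ((x ^ k)⁻¹ * F x) := by
    filter_upwards [isOpen_Ioi.mem_nhds hr] with x hx
    show -(1/4) * φ x * _ = _
    rw [hkey x hx]
  -- derivative of u at r
  have hv : HasDerivAt (fun x => -(1/4) * φ x * ((x ^ k)⁻¹ * F x))
      ((-(1/4) * ((Real.cosh r * r - Real.sinh r * 1) / r ^ 2 * (-(n : ℝ)/2)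
          * (Real.sinh r / r) ^ (-(n : ℝ)/2 - 1))) * ((r ^ k)⁻¹ * F r)
        + (-(1/4) * φ r) * ((-(↑k * r ^ (k-1)) / (r ^ k) ^ 2) * F r
          + (r ^ k)⁻¹ * G r)) r :=
    (hφderiv.const_mul (-(1/4) : ℝ)).mul (hpow.mul hFderiv)
  have hderivu : deriv u r = _ := huv.deriv_eq.trans hv.deriv
  have hur : u r = -(1/4) * φ r * ((r ^ k)⁻¹ * F r) := by
    show -(1/4) * φ r * _ = _
    rw [hkey r hr]
  rw [hderivu, hur]
  -- now plain algebra
  have hφr : φ r = (Real.sinh r / r) ^ (-(n : ℝ)/2) := rfl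
  have hGr : G r = r ^ (k-1) * g r / φ r := rfl
  have hPexp : (Real.sinh r / r) ^ (-(n : ℝ)/2 - 1)
      = (Real.sinh r / r) ^ (-(n : ℝ)/2) * (r / Real.sinh r) := by
    rw [Real.rpow_sub_one (ne_of_gt (hb r hr))]
    field_simp
  rw [hGr, hPexp, hφr]
  have hrk : (r:ℝ) ^ k = r ^ (k-1) * r := by
    conv_lhs => rw [← Nat.sub_add_cancel hk]
    rw [pow_succ]
  rw [hrk]
  have hP : (0:ℝ) < (Real.sinh r / r) ^ (-(n : ℝ)/2) := Real.rpow_pos_of_pos (hb r hr) _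
  generalize (Real.sinh r / r) ^ (-(n : ℝ)/2) = P at hP
  generalize (r:ℝ) ^ (k-1) = q at *
  have hq : q ≠ 0 := by
    intro h
    rw [h, zero_mul] at hrk
    exact pow_ne_zero k (ne_of_gt hr) hrk
  field_simp
  ring
end

section
/- Suppose N: [0,∞) → [0,∞) is nondecreasing, satisfies N(r) ≤ C_R·r^{n+1} for all r > 0, and satisfies (n+2)·∫₀^∞ (1+r)^{-(n+3)}·N(λr) dr ≥ c·λ^{n+1} for all λ > 0, with constants c, C_R > 0. Then there is a constant c' > 0 (depending only on c, C_R, n) such that N(λ) ≥ c'·λ^{n+1} for all λ > 0. -/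
/-!
Split the integral at `r = a`. On `(0, a]` monotonicity gives `N (l * r) ≤ N (l * a)`, and
`(n + 2) ∫₀^∞ (1 + r)^{-(n+3)} dr = 1`; on `(a, ∞)` the upper bound gives
`N (l * r) ≤ C_R l^{n+1} (1 + r)^{n+1}`, so the tail contributes at most
`(n + 2) C_R l^{n+1} / a`.
With `a = 2 (n + 2) C_R / c` the tail is at most half the lower bound, whence
`N (l * a) ≥ (c / 2) l^{n+1}`; rescaling `l` gives the claim with `c' = c / (2 a^{n+1})`.
-/

open MeasureTheory Set Filter Topology

lemma hasDerivAt_neg_inv_mul_one_add_pow (k : ℕ) {r : ℝ} (hr : 1 + r ≠ 0) :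
    HasDerivAt (fun r : ℝ => -((k + 1) * (1 + r) ^ (k + 1))⁻¹) ((1 + r) ^ (k + 2))⁻¹ r := by
  have hk : (k + 1 : ℝ) ≠ 0 := by positivity
  have h : HasDerivAt (fun r : ℝ => (k + 1) * (1 + r) ^ (k + 1))
      ((k + 1) * ((k + 1) * (1 + r) ^ k)) r := by
    simpa using (((hasDerivAt_id r).const_add 1).pow (k + 1)).const_mul (k + 1 : ℝ)
  refine (h.inv (mul_ne_zero hk (pow_ne_zero _ hr))).neg.congr_deriv ?_
  field_simp
  ring

lemma tendsto_neg_inv_mul_one_add_pow_atTop (k : ℕ) :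
    Tendsto (fun r : ℝ => -((k + 1) * (1 + r) ^ (k + 1))⁻¹) atTop (𝓝 0) := by
  have h : Tendsto (fun r : ℝ => (k + 1) * (1 + r) ^ (k + 1)) atTop atTop :=
    ((tendsto_pow_atTop k.succ_ne_zero).comp
      (tendsto_atTop_add_const_left _ 1 tendsto_id)).const_mul_atTop (by positivity)
  simpa using (tendsto_inv_atTop_zero.comp h).neg

section

variable (k : ℕ) {b : ℝ}

theorem integrableOn_Ioi_inv_one_add_pow (hb : -1 < b) :
    IntegrableOn (fun r : ℝ => ((1 + r) ^ (k + 2))⁻¹) (Ioi b) :=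
  integrableOn_Ioi_deriv_of_nonneg'
    (fun r hr => hasDerivAt_neg_inv_mul_one_add_pow k (by linarith [mem_Ici.mp hr]))
    (fun r hr => inv_nonneg.2 (pow_nonneg (by linarith [mem_Ioi.mp hr]) _))
    (tendsto_neg_inv_mul_one_add_pow_atTop k)

theorem integral_Ioi_inv_one_add_pow (hb : -1 < b) :
    ∫ r in Ioi b, ((1 + r) ^ (k + 2))⁻¹ = ((k + 1) * (1 + b) ^ (k + 1))⁻¹ := by
  rw [integral_Ioi_of_hasDerivAt_of_tendsto'
    (fun r hr => hasDerivAt_neg_inv_mul_one_add_pow k (by linarith [mem_Ici.mp hr]))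
    (integrableOn_Ioi_inv_one_add_pow k hb) (tendsto_neg_inv_mul_one_add_pow_atTop k)]
  ring

end

section

variable {N : ℝ → ℝ} {n : ℕ} {CR l a : ℝ}

lemma div_one_add_pow_le_add_indicator (hmono : Monotone N) (hpos : ∀ r, 0 ≤ N r)
    (hCR : 0 ≤ CR) (hub : ∀ r : ℝ, 0 < r → N r ≤ CR * r ^ (n + 1)) (hl : 0 < l)
    {r : ℝ} (hr : 0 < r) :
    N (l * r) / (1 + r) ^ (n + 3) ≤ N (l * a) * ((1 + r) ^ (n + 3))⁻¹ +
      (Ioi a).indicator (fun r => CR * l ^ (n + 1) * ((1 + r) ^ 2)⁻¹) r := by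
  have hr1 : 0 < 1 + r := by linarith
  rw [div_eq_mul_inv]
  rcases le_or_gt r a with hra | hra
  · have hmid : N (l * r) ≤ N (l * a) := hmono (by gcongr)
    have htail : 0 ≤ (Ioi a).indicator (fun r => CR * l ^ (n + 1) * ((1 + r) ^ 2)⁻¹) r :=
      indicator_nonneg (fun _ _ => by positivity) r
    calc N (l * r) * ((1 + r) ^ (n + 3))⁻¹ ≤ N (l * a) * ((1 + r) ^ (n + 3))⁻¹ := by gcongr
      _ ≤ _ := le_add_of_nonneg_right htail
  · have hhead : 0 ≤ N (l * a) * ((1 + r) ^ (n + 3))⁻¹ := mul_nonneg (hpos _) (by positivity)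
    have htail : N (l * r) * ((1 + r) ^ (n + 3))⁻¹ ≤ CR * l ^ (n + 1) * ((1 + r) ^ 2)⁻¹ :=
      calc N (l * r) * ((1 + r) ^ (n + 3))⁻¹
          ≤ CR * (l * r) ^ (n + 1) * ((1 + r) ^ (n + 3))⁻¹ := by
            gcongr; exact hub _ (by positivity)
        _ ≤ CR * (l * (1 + r)) ^ (n + 1) * ((1 + r) ^ (n + 3))⁻¹ := by gcongr; linarith
        _ = CR * l ^ (n + 1) * ((1 + r) ^ 2)⁻¹ := by
          rw [mul_pow, pow_add _ (n + 1) 2]; field_simp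
    rw [indicator_of_mem (mem_Ioi.2 hra)]
    linarith

lemma integral_div_one_add_pow_le (hmono : Monotone N) (hpos : ∀ r, 0 ≤ N r)
    (hCR : 0 ≤ CR) (hub : ∀ r : ℝ, 0 < r → N r ≤ CR * r ^ (n + 1)) (hl : 0 < l)
    (ha : 0 ≤ a) :
    (n + 2) * ∫ r in Ioi (0 : ℝ), N (l * r) / (1 + r) ^ (n + 3) ≤
      N (l * a) + (n + 2) * (CR * l ^ (n + 1)) / (1 + a) := by
  have hhead : IntegrableOn (fun r => N (l * a) * ((1 + r) ^ (n + 3))⁻¹) (Ioi 0) :=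
    (integrableOn_Ioi_inv_one_add_pow (n + 1) (by norm_num)).const_mul _
  have htail : IntegrableOn (fun r => CR * l ^ (n + 1) * ((1 + r) ^ 2)⁻¹) (Ioi a) :=
    (integrableOn_Ioi_inv_one_add_pow 0 (by linarith)).const_mul _
  have hhead_eq : ∫ r in Ioi (0 : ℝ), ((1 + r) ^ (n + 3))⁻¹ = ((n : ℝ) + 2)⁻¹ := by
    rw [integral_Ioi_inv_one_add_pow (n + 1) (by norm_num)]
    norm_num
    ring
  have htail_eq : ∫ r in Ioi a, ((1 + r) ^ 2)⁻¹ = (1 + a)⁻¹ := by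
    rw [integral_Ioi_inv_one_add_pow 0 (by linarith)]
    norm_num
  have htail_ind := (integrable_indicator_iff measurableSet_Ioi).2 htail
  have hdom : ∫ r in Ioi (0 : ℝ), N (l * r) / (1 + r) ^ (n + 3) ≤
      ∫ r in Ioi (0 : ℝ), (N (l * a) * ((1 + r) ^ (n + 3))⁻¹ +
        (Ioi a).indicator (fun r => CR * l ^ (n + 1) * ((1 + r) ^ 2)⁻¹) r) :=
    integral_mono_of_nonneg
      (ae_restrict_of_forall_mem measurableSet_Ioi fun r hr =>
        div_nonneg (hpos _) (pow_nonneg (by linarith [mem_Ioi.1 hr]) _))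
      (hhead.add htail_ind.integrableOn)
      (ae_restrict_of_forall_mem measurableSet_Ioi fun r hr =>
        div_one_add_pow_le_add_indicator hmono hpos hCR hub hl hr)
  rw [integral_add hhead htail_ind.integrableOn, integral_const_mul,
    setIntegral_indicator measurableSet_Ioi, Ioi_inter_Ioi, max_eq_right ha, integral_const_mul,
    hhead_eq, htail_eq] at hdom
  have ha1 : (0 : ℝ) < 1 + a := by linarith
  calc (n + 2) * ∫ r in Ioi (0 : ℝ), N (l * r) / (1 + r) ^ (n + 3)
      ≤ (n + 2) * (N (l * a) * ((n : ℝ) + 2)⁻¹ + CR * l ^ (n + 1) * (1 + a)⁻¹) := by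
        gcongr
    _ = N (l * a) + (n + 2) * (CR * l ^ (n + 1)) / (1 + a) := by field_simp

lemma exists_pos_half_mul_pow_le {c : ℝ} (hc : 0 < c) (hCR : 0 < CR) (hmono : Monotone N)
    (hpos : ∀ r, 0 ≤ N r) (hub : ∀ r : ℝ, 0 < r → N r ≤ CR * r ^ (n + 1))
    (hlb : ∀ l : ℝ, 0 < l →
      c * l ^ (n + 1) ≤ (n + 2 : ℝ) * ∫ r in Ioi (0 : ℝ), N (l * r) / (1 + r) ^ (n + 3)) :
    ∃ a > 0, ∀ l : ℝ, 0 < l → c / 2 * l ^ (n + 1) ≤ N (l * a) := by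
  refine ⟨2 * (n + 2) * CR / c, by positivity, fun l hl => ?_⟩
  have hsplit := integral_div_one_add_pow_le hmono hpos hCR.le hub hl (a := 2 * (n + 2) * CR / c)
    (by positivity)
  have htail : (n + 2) * (CR * l ^ (n + 1)) / (1 + 2 * (n + 2) * CR / c) ≤ c / 2 * l ^ (n + 1) :=
    calc (n + 2) * (CR * l ^ (n + 1)) / (1 + 2 * (n + 2) * CR / c)
        ≤ (n + 2) * (CR * l ^ (n + 1)) / (2 * (n + 2) * CR / c) := by
          gcongr; linarith
      _ = c / 2 * l ^ (n + 1) := by field_simp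
  linarith [hlb l hl]

end

/-- The Tauberian step in the resonance counting lower bound: if N is
nondecreasing, nonnegative, bounded above by C_R r^{n+1}, and satisfies
(n+2) ∫₀^∞ (1+r)^{-(n+3)} N(λr) dr ≥ c λ^{n+1}, then N(λ) ≥ c' λ^{n+1}. -/
theorem tauberian_lower_bound (n : ℕ) (N : ℝ → ℝ) (c CR : ℝ)
    (hc : 0 < c) (hCR : 0 < CR) (hmono : Monotone N) (hpos : ∀ r, 0 ≤ N r)
    (hub : ∀ r : ℝ, 0 < r → N r ≤ CR * r^(n+1))
    (hlb : ∀ l : ℝ, 0 < l →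
      c * l^(n+1) ≤ (n+2 : ℝ) * ∫ r in Set.Ioi (0:ℝ), N (l * r) / (1 + r)^(n+3)) :
    ∃ c' > 0, ∀ l : ℝ, 0 < l → c' * l^(n+1) ≤ N l := by
  obtain ⟨a, ha0, hscale⟩ := exists_pos_half_mul_pow_le hc hCR hmono hpos hub hlb
  refine ⟨c / (2 * a ^ (n + 1)), by positivity, fun l hl => ?_⟩
  have h := hscale (l / a) (div_pos hl ha0)
  rw [div_mul_cancel₀ l ha0.ne'] at h
  calc c / (2 * a ^ (n + 1)) * l ^ (n + 1) = c / 2 * (l / a) ^ (n + 1) := by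
        rw [div_pow]; field_simp
    _ ≤ N l := h
end
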